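/- For every natural number m ≥ 1, the 2m-th derivative at x = 0 of the function f(x) = (1/(2π²)) ∑_{n=1}^∞ (x² - n²)/(x² + n²)² equals ((-1)^{m+1} (2m+1)! / (2π²)) · ζ(2m+2). -/

import Mathlib

open Real
open scoped Nat NNReal

/-!
Each summand expands as a differentiated geometric series,
`(t - a) / (t + a) ^ 2 = ∑ₖ (-1)^(k+1) (2k+1) tᵏ / a^(k+1)` for `|t| < a`.
Taking `t = x²`, `a = (n+1)²` and interchanging the two absolutely convergent sums gives the
Taylor series of `f` at `0`: only even powers occur, and the coefficient of `x^(2k)` is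
`(-1)^(k+1) (2k+1) ζ(2k+2) / (2π²)`.
-/

theorem HasFPowerSeriesAt.iteratedDeriv_eq_factorial_mul {𝕜 : Type*}
    [NontriviallyNormedField 𝕜] [CompleteSpace 𝕜] [CharZero 𝕜] {f : 𝕜 → 𝕜} {c : ℕ → 𝕜} {x : 𝕜}
    (hf : HasFPowerSeriesAt f (FormalMultilinearSeries.ofScalars 𝕜 c) x) (n : ℕ) :
    iteratedDeriv n f x = n ! * c n := by
  have hc := (FormalMultilinearSeries.ofScalars_series_eq_iff 𝕜 c _).1
    (hf.eq_formalMultilinearSeries hf.analyticAt.hasFPowerSeriesAt)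
  rw [hc, mul_div_cancel₀ _ (Nat.cast_ne_zero.2 n.factorial_ne_zero)]

theorem hasFPowerSeriesOnBall_ofScalars_of_hasSum {𝕜 : Type*} [RCLike 𝕜] {f : 𝕜 → 𝕜}
    {c : ℕ → 𝕜} {r : ℝ≥0} (hr : 0 < r)
    (hf : ∀ y : 𝕜, ‖y‖ < r → HasSum (fun n => c n * y ^ n) (f y)) :
    HasFPowerSeriesOnBall f (FormalMultilinearSeries.ofScalars 𝕜 c) 0 r where
  r_le := by
    refine ENNReal.le_of_forall_nnreal_lt fun t ht => ?_
    have hconv := hf ((t : ℝ) : 𝕜) (by simpa using ENNReal.coe_lt_coe.1 ht)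
    refine FormalMultilinearSeries.le_radius_of_tendsto _
      (hconv.summable.tendsto_atTop_zero.norm.congr fun n => ?_)
    simp
  r_pos := by simpa using hr
  hasSum {y} hy := by
    simpa [FormalMultilinearSeries.ofScalars_apply_eq, mul_comm] using hf y (by simpa using hy)

theorem hasSum_extend_two_mul_mul_pow_iff {R : Type*} [Semiring R] [TopologicalSpace R]
    {b : ℕ → R} {y s : R} :
    HasSum (fun j => Function.extend (2 * ·) b 0 j * y ^ j) s ↔
      HasSum (fun k => b k * (y ^ 2) ^ k) s := by
  have hinj : Function.Injective (2 * · : ℕ → ℕ) := mul_right_injective₀ two_ne_zero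
  rw [← hinj.hasSum_iff fun j hj => by simp [Function.extend_apply' _ _ _ hj]]
  simp [Function.comp_def, hinj.extend_apply, pow_mul]

theorem hasSum_two_mul_add_one_mul_geometric {𝕜 : Type*} [NormedField 𝕜] [CompleteSpace 𝕜]
    {z : 𝕜} (hz : ‖z‖ < 1) :
    HasSum (fun k : ℕ => (2 * k + 1) * z ^ k) ((1 + z) / (1 - z) ^ 2) := by
  have hz1 : 1 - z ≠ 0 := sub_ne_zero.2 fun h => by simp [← h] at hz
  have hsum := ((hasSum_coe_mul_geometric_of_norm_lt_one hz).mul_left 2).add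
    (hasSum_geometric_of_norm_lt_one hz)
  rw [show (1 + z) / (1 - z) ^ 2 = 2 * (z / (1 - z) ^ 2) + (1 - z)⁻¹ by field_simp; ring]
  exact hsum.congr_fun fun k => by ring

theorem hasSum_sub_div_add_sq {𝕜 : Type*} [NormedField 𝕜] [CompleteSpace 𝕜] {t a : 𝕜}
    (hta : ‖t‖ < ‖a‖) :
    HasSum (fun k : ℕ => (-1) ^ (k + 1) * (2 * k + 1) * t ^ k / a ^ (k + 1))
      ((t - a) / (t + a) ^ 2) := by
  have ha : a ≠ 0 := norm_pos_iff.1 ((norm_nonneg t).trans_lt hta)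
  have hta' : t + a ≠ 0 := fun h => by simp [eq_neg_of_add_eq_zero_left h] at hta
  have hz : ‖-t / a‖ < 1 := by
    rwa [norm_div, norm_neg, div_lt_one (norm_pos_iff.2 ha)]
  have hsum := (hasSum_two_mul_add_one_mul_geometric hz).mul_left (-a⁻¹)
  rw [show (t - a) / (t + a) ^ 2 = -a⁻¹ * ((1 + -t / a) / (1 - -t / a) ^ 2) by
    rw [show 1 - -t / a = (t + a) / a by field_simp; ring]
    field_simp
    ring]
  exact hsum.congr_fun fun k => by rw [div_pow, neg_pow]; field_simp; ring

theorem hasSum_tsum_sub_div_add_sq {a : ℕ → ℝ} (ha : ∀ n, 1 ≤ a n)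
    (hsum : Summable fun n => 1 / a n) {t : ℝ} (ht : |t| < 1) :
    HasSum (fun k : ℕ => (-1) ^ (k + 1) * (2 * k + 1) * (∑' n, 1 / a n ^ (k + 1)) * t ^ k)
      (∑' n, (t - a n) / (t + a n) ^ 2) := by
  set F : ℕ × ℕ → ℝ := fun p =>
    (-1) ^ (p.1 + 1) * (2 * (p.1 : ℝ) + 1) * t ^ p.1 / a p.2 ^ (p.1 + 1)
  have ha0 (n : ℕ) : 0 < a n := one_pos.trans_le (ha n)
  have hpow_le (k n : ℕ) : 1 / a n ^ (k + 1) ≤ 1 / a n :=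
    one_div_le_one_div_of_le (ha0 n) (le_self_pow₀ (ha n) k.succ_ne_zero)
  have hF : Summable F := by
    have hgeom := (hasSum_two_mul_add_one_mul_geometric (show ‖|t|‖ < 1 by simpa)).summable
    refine (hgeom.mul_of_nonneg hsum (fun k => by positivity)
      fun n => (one_div_pos.2 (ha0 n)).le).of_norm_bounded fun ⟨k, n⟩ => ?_
    have hcoeff : (0 : ℝ) ≤ 2 * k + 1 := by positivity
    calc ‖F (k, n)‖ = (2 * k + 1) * |t| ^ k * (1 / a n ^ (k + 1)) := by
          simp [F, abs_of_pos (ha0 n), abs_of_nonneg hcoeff, div_eq_mul_inv]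
      _ ≤ (2 * k + 1) * |t| ^ k * (1 / a n) :=
          mul_le_mul_of_nonneg_left (hpow_le k n) (by positivity)
  have hrows (k : ℕ) : HasSum (fun n => F (k, n))
      ((-1) ^ (k + 1) * (2 * k + 1) * (∑' n, 1 / a n ^ (k + 1)) * t ^ k) := by
    have hk : Summable fun n => 1 / a n ^ (k + 1) :=
      hsum.of_nonneg_of_le (fun n => by have := ha0 n; positivity) (hpow_le k)
    exact (hk.hasSum.mul_left _).mul_right (t ^ k) |>.congr_fun fun n => by simp only [F]; ring
  have hcols (n : ℕ) : HasSum (fun k => F (k, n)) ((t - a n) / (t + a n) ^ 2) := by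
    have hta : ‖t‖ < ‖a n‖ := by
      rw [Real.norm_eq_abs, Real.norm_eq_abs, abs_of_pos (ha0 n)]
      exact ht.trans_le (ha n)
    exact (hasSum_sub_div_add_sq hta).congr_fun fun k => by simp only [F]
  have hswap := ((Equiv.prodComm ℕ ℕ).hasSum_iff.2 hF.hasSum).prod_fiberwise hcols
  rw [hswap.tsum_eq]
  exact hF.hasSum.prod_fiberwise hrows

theorem riemannZeta_two_mul_eq_tsum {k : ℕ} (hk : k ≠ 0) :
    riemannZeta (2 * k) = ((∑' n : ℕ, 1 / (((n : ℝ) + 1) ^ 2) ^ k : ℝ) : ℂ) := by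
  have hre : 1 < (2 * k : ℂ).re := by
    norm_cast
    omega
  rw [zeta_eq_tsum_one_div_nat_add_one_cpow hre, Complex.ofReal_tsum]
  refine tsum_congr fun n => ?_
  rw [show (2 * k : ℂ) = ((2 * k : ℕ) : ℂ) by push_cast; ring, Complex.cpow_natCast, pow_mul]
  push_cast
  rfl

theorem iteratedDeriv_series_function_general (m : ℕ) :
    ((iteratedDeriv (2 * m)
      (fun x : ℝ => (1 / (2 * π ^ 2)) * ∑' n : ℕ,
        (x ^ 2 - ((n : ℝ) + 1) ^ 2) / (x ^ 2 + ((n : ℝ) + 1) ^ 2) ^ 2) 0 : ℝ) : ℂ) =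
      ((-1) ^ (m + 1) * ((2 * m + 1).factorial : ℂ) / (2 * (π : ℂ) ^ 2)) *
        riemannZeta (2 * m + 2) := by
  set b : ℕ → ℝ := fun k => 1 / (2 * π ^ 2) *
    ((-1) ^ (k + 1) * (2 * k + 1) * ∑' n : ℕ, 1 / (((n : ℝ) + 1) ^ 2) ^ (k + 1))
  have hsq_ge_one (n : ℕ) : 1 ≤ ((n : ℝ) + 1) ^ 2 :=
    one_le_pow₀ (le_add_of_nonneg_left n.cast_nonneg)
  have hsq_summable : Summable fun n : ℕ => 1 / ((n : ℝ) + 1) ^ 2 := by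
    simpa using (Real.summable_one_div_nat_add_rpow 1 2).2 one_lt_two
  have hps := hasFPowerSeriesOnBall_ofScalars_of_hasSum (c := Function.extend (2 * ·) b 0)
    one_pos fun y hy => by
      have hy2 : |y ^ 2| < 1 := by
        simpa [abs_pow] using pow_lt_one₀ (abs_nonneg y) hy two_ne_zero
      rw [hasSum_extend_two_mul_mul_pow_iff]
      exact ((hasSum_tsum_sub_div_add_sq hsq_ge_one hsq_summable hy2).mul_left
        (1 / (2 * π ^ 2))).congr_fun fun k => by simp only [b]; ring
  rw [hps.hasFPowerSeriesAt.iteratedDeriv_eq_factorial_mul,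
    (mul_right_injective₀ two_ne_zero).extend_apply,
    show (2 * m + 2 : ℂ) = 2 * ((m + 1 : ℕ) : ℂ) by push_cast; ring,
    riemannZeta_two_mul_eq_tsum m.succ_ne_zero, Nat.factorial_succ]
  simp only [b]
  push_cast
  field_simp

theorem iteratedDeriv_series_function (m : ℕ) (hm : 1 ≤ m) :
    ((iteratedDeriv (2 * m)
      (fun x : ℝ => (1 / (2 * π ^ 2)) * ∑' n : ℕ,
        (x ^ 2 - ((n : ℝ) + 1) ^ 2) / (x ^ 2 + ((n : ℝ) + 1) ^ 2) ^ 2) 0 : ℝ) : ℂ) =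
      ((-1) ^ (m + 1) * ((2 * m + 1).factorial : ℂ) / (2 * (π : ℂ) ^ 2)) *
        riemannZeta (2 * m + 2) :=
  iteratedDeriv_series_function_general m
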